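/- For a non-autonomous sequence {h_k} of Hénon maps drawn from a finite generating set of an attracting semigroup, the boundary of the non-autonomous attracting basin Ω_{h} at the origin is contained in the boundary of the non-autonomous filled positive Julia set: ∂Ω_{h} ⊆ ∂K_{h}^+. -/

import Mathlib

/-!
The basin `Ω_h` is open: once an orbit enters the ball `B(0;r)`, on which every generator
contracts, it converges to `0` geometrically, so `Ω_h` is a union of preimages of that ball.
Hence a boundary point `z` of `Ω_h` lies outside `Ω_h` but in the closure of `Ω_h ⊆ K_h^+`.
If `z` were interior to `K_h^+`, the filtration of Hénon maps (`V_R^+` is forward invariant and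
`|y|` doubles on it, so bounded orbits never enter it) would bound the holomorphic maps `h(k)`
uniformly near `z`. By the Schwarz lemma they would then be equicontinuous at `z`, and the
convergence to `0` at the points of `Ω_h` near `z` would pass to `z` itself.
-/

open Filter Metric Set Bornology

noncomputable section

/-- A generalized Hénon map of ℂ²: `H (x,y) = (y, p(y) - a x)` with `a ≠ 0` and
`deg p = d ≥ 2`. -/
def IsGenHenonDeg (h : ℂ × ℂ → ℂ × ℂ) (d : ℕ) : Prop :=
  ∃ (a : ℂ) (p : Polynomial ℂ), a ≠ 0 ∧ 2 ≤ p.natDegree ∧ p.natDegree = d ∧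
    ∀ x y : ℂ, h (x, y) = (y, p.eval y - a * x)

/-- A Hénon map of degree `d`: a finite (nonempty) composition of generalized
Hénon maps, `d` being the product of the degrees of the factors. -/
def IsHenonDeg (h : ℂ × ℂ → ℂ × ℂ) (d : ℕ) : Prop :=
  ∃ l : List ((ℂ × ℂ → ℂ × ℂ) × ℕ), l ≠ [] ∧
    (∀ gd ∈ l, IsGenHenonDeg gd.1 gd.2) ∧
    h = (l.map Prod.fst).foldr (· ∘ ·) id ∧ d = (l.map Prod.snd).prod

def IsHenon (h : ℂ × ℂ → ℂ × ℂ) : Prop := ∃ d, IsHenonDeg h d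

/-- The polydisk `V_R = {max(|x|,|y|) ≤ R}`. -/
def VR (R : ℝ) : Set (ℂ × ℂ) := {z | max ‖z.1‖ ‖z.2‖ ≤ R}

/-- `V_R^+ = {|y| ≥ max(|x|, R)}`. -/
def VRp (R : ℝ) : Set (ℂ × ℂ) := {z | max ‖z.1‖ R ≤ ‖z.2‖}

/-- `V_R^- = {|x| ≥ max(|y|, R)}`. -/
def VRm (R : ℝ) : Set (ℂ × ℂ) := {z | max ‖z.2‖ R ≤ ‖z.1‖}

/-- The element of the semigroup given by the word `w`:
`H_{w 0} ∘ H_{w 1} ∘ ⋯ ∘ H_{w (k-1)}`. -/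
def wordProd {n : ℕ} (H : Fin n → Equiv.Perm (ℂ × ℂ)) {k : ℕ}
    (w : Fin k → Fin n) : Equiv.Perm (ℂ × ℂ) :=
  (List.ofFn fun j => H (w j)).prod

/-- The non-autonomous composition `h(k) = h_k ∘ ⋯ ∘ h_1` (with `h(0) = id`). -/
def compSeq (h : ℕ → ℂ × ℂ → ℂ × ℂ) : ℕ → ℂ × ℂ → ℂ × ℂ
  | 0 => id
  | k + 1 => h (k + 1) ∘ compSeq h k

open Polynomial in
theorem Polynomial.exists_mul_norm_le_norm_eval {𝕜 : Type*} [NormedField 𝕜] {p : 𝕜[X]}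
    (hp : 2 ≤ p.natDegree) (A : ℝ) :
    ∃ R₀ : ℝ, ∀ y : 𝕜, R₀ ≤ ‖y‖ → A * ‖y‖ ≤ ‖p.eval y‖ := by
  have hq : 0 < p.divX.degree := natDegree_pos_iff_degree_pos.1 (by
    rw [natDegree_divX_eq_natDegree_tsub_one]; omega)
  have hlarge : ∀ᶠ y in comap (‖·‖) atTop,
      A + 1 ≤ ‖p.divX.eval y‖ ∧ ‖p.coeff 0‖ ≤ ‖y‖ :=
    ((p.divX.tendsto_norm_atTop hq tendsto_comap).eventually_ge_atTop _).and
      (tendsto_comap.eventually_ge_atTop _)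
  obtain ⟨R₀, -, hR₀⟩ := (atTop_basis.comap _).eventually_iff.1 hlarge
  refine ⟨R₀, fun y hy => ?_⟩
  obtain ⟨hqy, hy0⟩ := hR₀ (mem_Ici.2 hy)
  have hsplit : p.eval y = p.divX.eval y * y + p.coeff 0 := by
    conv_lhs => rw [← divX_mul_X_add p]
    simp
  calc A * ‖y‖ ≤ (A + 1) * ‖y‖ - ‖p.coeff 0‖ := by linarith
    _ ≤ ‖p.divX.eval y * y‖ - ‖-p.coeff 0‖ := by
        rw [norm_mul, norm_neg]; gcongr
    _ ≤ ‖p.eval y‖ := by rw [hsplit, ← sub_neg_eq_add]; exact norm_sub_norm_le _ _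

theorem equicontinuousAt_of_differentiableOn_of_norm_le {ι E F : Type*}
    [NormedAddCommGroup E] [NormedSpace ℂ E] [NormedAddCommGroup F] [NormedSpace ℂ F]
    {f : ι → E → F} {c : E} {ρ C : ℝ} (hρ : 0 < ρ)
    (hd : ∀ i, DifferentiableOn ℂ (f i) (ball c ρ)) (hC : ∀ i, ∀ u ∈ ball c ρ, ‖f i u‖ ≤ C) :
    EquicontinuousAt f c := by
  refine Metric.equicontinuousAt_of_continuity_modulus (fun u => 2 * C / ρ * dist u c) ?_ f ?_
  · simpa using
      ((tendsto_id (x := nhds c)).dist (tendsto_const_nhds (x := c))).const_mul (2 * C / ρ)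
  · filter_upwards [ball_mem_nhds c hρ] with u hu i
    have hmaps : MapsTo (f i) (ball c ρ) (closedBall (f i c) (2 * C)) := fun v hv => by
      rw [mem_closedBall, two_mul]
      exact (dist_le_norm_add_norm _ _).trans
        (add_le_add (hC i v hv) (hC i c (mem_ball_self hρ)))
    rw [dist_comm]
    exact Complex.dist_le_div_mul_dist_of_mapsTo_ball (hd i) hmaps hu

theorem IsGenHenonDeg.differentiable {g : ℂ × ℂ → ℂ × ℂ} {d : ℕ} (hg : IsGenHenonDeg g d) :
    Differentiable ℂ g := by
  obtain ⟨a, p, -, -, -, hfun⟩ := hg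
  have hg : g = fun z => (z.2, p.eval z.2 - a * z.1) := funext fun z => hfun z.1 z.2
  rw [hg]
  fun_prop

theorem IsHenon.differentiable {g : ℂ × ℂ → ℂ × ℂ} (hg : IsHenon g) : Differentiable ℂ g := by
  obtain ⟨-, l, -, hfac, rfl, -⟩ := hg
  induction l with
  | nil => exact differentiable_id
  | cons gd l ih =>
    exact (hfac gd (by simp)).differentiable.comp (ih fun x hx => hfac x (by simp [hx]))

theorem mem_VRp {R : ℝ} {z : ℂ × ℂ} : z ∈ VRp R ↔ max ‖z.1‖ R ≤ ‖z.2‖ := Iff.rfl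

def RespectsFiltration (R : ℝ) (g : ℂ × ℂ → ℂ × ℂ) : Prop :=
  ∀ z, (z ∈ VRp R → g z ∈ VRp R ∧ 2 * ‖z.2‖ ≤ ‖(g z).2‖) ∧
    (g z ∈ VRp R ∨ ‖g z‖ ≤ max ‖z‖ R)

theorem RespectsFiltration.comp {R : ℝ} {f g : ℂ × ℂ → ℂ × ℂ} (hf : RespectsFiltration R f)
    (hg : RespectsFiltration R g) : RespectsFiltration R (g ∘ f) := by
  intro z
  refine ⟨fun hz => ?_, ?_⟩
  · obtain ⟨hfz, hf2⟩ := (hf z).1 hz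
    obtain ⟨hgfz, hg2⟩ := (hg (f z)).1 hfz
    exact ⟨hgfz, by simp only [Function.comp_apply]; linarith [norm_nonneg z.2]⟩
  · rcases (hf z).2 with hfz | hfz
    · exact Or.inl ((hg (f z)).1 hfz).1
    · refine (hg (f z)).2.imp id fun hgfz => hgfz.trans ?_
      simpa only [max_assoc, max_self] using max_le_max_right R hfz

theorem IsGenHenonDeg.exists_respectsFiltration {g : ℂ × ℂ → ℂ × ℂ} {d : ℕ}
    (hg : IsGenHenonDeg g d) : ∃ R₀, ∀ R ≥ R₀, RespectsFiltration R g := by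
  obtain ⟨a, p, -, hp, -, hfun⟩ := hg
  obtain ⟨R₀, hR₀⟩ := p.exists_mul_norm_le_norm_eval hp (‖a‖ + 2)
  refine ⟨R₀, fun R hR z => ⟨fun hz => ?_, ?_⟩⟩
  · obtain ⟨hxy, hRy⟩ := max_le_iff.1 (mem_VRp.1 hz)
    have hax : ‖a * z.1‖ ≤ ‖a‖ * ‖z.2‖ := by rw [norm_mul]; gcongr
    have h2 : 2 * ‖z.2‖ ≤ ‖(g z).2‖ := by
      rw [hfun z.1 z.2]
      linarith [hR₀ z.2 (hR.trans hRy), norm_sub_norm_le (p.eval z.2) (a * z.1)]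
    refine ⟨mem_VRp.2 (max_le ?_ ?_), h2⟩ <;> rw [hfun z.1 z.2] at h2 ⊢ <;> dsimp only at h2 ⊢ <;>
      linarith [norm_nonneg z.2]
  · refine or_iff_not_imp_left.2 fun hgz => ?_
    have h1 : ‖(g z).1‖ = ‖z.2‖ := by rw [hfun z.1 z.2]
    have h2 : ‖(g z).2‖ ≤ max ‖z.2‖ R := (lt_of_not_ge hgz).le.trans_eq (by rw [h1])
    rw [Prod.norm_def, h1]
    exact max_le (le_max_of_le_left (norm_snd_le z))
      (h2.trans (max_le_max_right R (norm_snd_le z)))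

theorem exists_respectsFiltration_foldr :
    ∀ l : List ((ℂ × ℂ → ℂ × ℂ) × ℕ), l ≠ [] → (∀ gd ∈ l, IsGenHenonDeg gd.1 gd.2) →
      ∃ R₀, ∀ R ≥ R₀, RespectsFiltration R ((l.map Prod.fst).foldr (· ∘ ·) id)
  | [], hne, _ => absurd rfl hne
  | [gd], _, hfac => by simpa using (hfac gd (by simp)).exists_respectsFiltration
  | gd :: gd' :: l, _, hfac => by
    obtain ⟨R₁, h₁⟩ := (hfac gd (by simp)).exists_respectsFiltration
    obtain ⟨R₂, h₂⟩ := exists_respectsFiltration_foldr (gd' :: l) (by simp)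
      fun x hx => hfac x (List.mem_cons_of_mem _ hx)
    exact ⟨max R₁ R₂, fun R hR =>
      (h₂ R (le_of_max_le_right hR)).comp (h₁ R (le_of_max_le_left hR))⟩

theorem IsHenon.exists_respectsFiltration {g : ℂ × ℂ → ℂ × ℂ} (hg : IsHenon g) :
    ∃ R₀, ∀ R ≥ R₀, RespectsFiltration R g := by
  obtain ⟨-, l, hne, hfac, rfl, -⟩ := hg
  exact exists_respectsFiltration_foldr l hne hfac

theorem exists_pos_respectsFiltration {ι : Type*} [Finite ι] {H : ι → ℂ × ℂ → ℂ × ℂ}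
    (hH : ∀ i, IsHenon (H i)) : ∃ R > 0, ∀ i, RespectsFiltration R (H i) := by
  choose R₀ hR₀ using fun i => (hH i).exists_respectsFiltration
  obtain ⟨M, hM⟩ := Finite.bddAbove_range R₀
  exact ⟨max M 1, by positivity,
    fun i => hR₀ i _ ((hM (mem_range_self i)).trans (le_max_left _ _))⟩

def basin (h : ℕ → ℂ × ℂ → ℂ × ℂ) : Set (ℂ × ℂ) :=
  {z | Tendsto (fun k => compSeq h k z) atTop (nhds 0)}

def filledJulia (h : ℕ → ℂ × ℂ → ℂ × ℂ) : Set (ℂ × ℂ) :=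
  {z | IsBounded (range fun k => compSeq h k z)}

theorem basin_subset_filledJulia (h : ℕ → ℂ × ℂ → ℂ × ℂ) : basin h ⊆ filledJulia h :=
  fun _ hz => hz.cauchySeq.isBounded_range

@[simp]
theorem compSeq_succ_apply (h : ℕ → ℂ × ℂ → ℂ × ℂ) (k : ℕ) (z : ℂ × ℂ) :
    compSeq h (k + 1) z = h (k + 1) (compSeq h k z) := rfl

theorem differentiable_compSeq {h : ℕ → ℂ × ℂ → ℂ × ℂ} (hd : ∀ k, Differentiable ℂ (h k)) :
    ∀ k, Differentiable ℂ (compSeq h k)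
  | 0 => differentiable_id
  | k + 1 => (hd (k + 1)).comp (differentiable_compSeq hd k)

section Filtration

variable {R : ℝ} {h : ℕ → ℂ × ℂ → ℂ × ℂ} {z : ℂ × ℂ}

theorem two_pow_mul_le_norm_compSeq_of_mem_VRp (hP : ∀ k, RespectsFiltration R (h k)) {k₀ : ℕ}
    (hk₀ : compSeq h k₀ z ∈ VRp R) (m : ℕ) :
    compSeq h (k₀ + m) z ∈ VRp R ∧ 2 ^ m * R ≤ ‖(compSeq h (k₀ + m) z).2‖ := by
  induction m with
  | zero => exact ⟨hk₀, by simpa using le_of_max_le_right (mem_VRp.1 hk₀)⟩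
  | succ m ih =>
    rw [← add_assoc, compSeq_succ_apply]
    obtain ⟨hmem, hgrow⟩ := (hP (k₀ + m + 1) _).1 ih.1
    refine ⟨hmem, ?_⟩
    rw [pow_succ]
    linarith [ih.2]

theorem compSeq_notMem_VRp_of_mem_filledJulia (hR : 0 < R)
    (hP : ∀ k, RespectsFiltration R (h k)) (hz : z ∈ filledJulia h) (k : ℕ) :
    compSeq h k z ∉ VRp R := by
  intro hk
  obtain ⟨C, hC⟩ :=
    isBounded_iff_forall_norm_le.1 (show IsBounded (range fun k => compSeq h k z) from hz)
  obtain ⟨m, hm⟩ := pow_unbounded_of_one_lt (C / R) one_lt_two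
  have hgrow := (two_pow_mul_le_norm_compSeq_of_mem_VRp hP hk m).2
  have hbound :=
    (norm_snd_le _).trans (hC _ (mem_range_self (f := fun k => compSeq h k z) (k + m)))
  rw [div_lt_iff₀ hR] at hm
  linarith

theorem norm_compSeq_le_of_mem_filledJulia (hR : 0 < R)
    (hP : ∀ k, RespectsFiltration R (h k)) (hz : z ∈ filledJulia h) (k : ℕ) :
    ‖compSeq h k z‖ ≤ max ‖z‖ R := by
  induction k with
  | zero => exact le_max_left _ _
  | succ k ih =>
    rcases (hP (k + 1) (compSeq h k z)).2 with hmem | hle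
    · exact absurd hmem (compSeq_notMem_VRp_of_mem_filledJulia hR hP hz (k + 1))
    · simpa only [compSeq_succ_apply, max_assoc, max_self] using
        hle.trans (max_le_max_right R ih)

end Filtration

section Basin

variable {r α : ℝ} {h : ℕ → ℂ × ℂ → ℂ × ℂ} {z : ℂ × ℂ}

theorem norm_compSeq_add_le (hα0 : 0 ≤ α) (hα1 : α ≤ 1)
    (hattr : ∀ k, ∀ u ∈ ball (0 : ℂ × ℂ) r, ‖h k u‖ ≤ α * ‖u‖) {k₀ : ℕ}
    (hk₀ : compSeq h k₀ z ∈ ball 0 r) (j : ℕ) :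
    ‖compSeq h (k₀ + j) z‖ ≤ α ^ j * ‖compSeq h k₀ z‖ := by
  induction j with
  | zero => simp
  | succ j ih =>
    have hball : compSeq h (k₀ + j) z ∈ ball 0 r := by
      refine mem_ball_zero_iff.2 (ih.trans_lt ?_)
      exact (mul_le_of_le_one_left (norm_nonneg _) (pow_le_one₀ hα0 hα1)).trans_lt
        (mem_ball_zero_iff.1 hk₀)
    calc ‖compSeq h (k₀ + (j + 1)) z‖ ≤ α * ‖compSeq h (k₀ + j) z‖ := hattr _ _ hball
      _ ≤ α * (α ^ j * ‖compSeq h k₀ z‖) := by gcongr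
      _ = α ^ (j + 1) * ‖compSeq h k₀ z‖ := by ring

theorem isOpen_basin (hr : 0 < r) (hα0 : 0 ≤ α) (hα1 : α < 1)
    (hattr : ∀ k, ∀ u ∈ ball (0 : ℂ × ℂ) r, ‖h k u‖ ≤ α * ‖u‖)
    (hcont : ∀ k, Continuous (compSeq h k)) : IsOpen (basin h) := by
  suffices basin h = ⋃ k, compSeq h k ⁻¹' ball 0 r by
    rw [this]
    exact isOpen_iUnion fun k => isOpen_ball.preimage (hcont k)
  refine Subset.antisymm (fun z hz => ?_) (iUnion_subset fun k₀ z hk₀ => ?_)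
  · obtain ⟨k, hk⟩ := (hz.eventually (ball_mem_nhds 0 hr)).exists
    exact mem_iUnion.2 ⟨k, hk⟩
  · refine (tendsto_add_atTop_iff_nat k₀).1 (squeeze_zero_norm
      (a := fun j => α ^ j * ‖compSeq h k₀ z‖) (fun j => ?_) ?_)
    · rw [add_comm]
      exact norm_compSeq_add_le hα0 hα1.le hattr hk₀ j
    · simpa using (tendsto_pow_atTop_nhds_zero_of_lt_one hα0 hα1).mul_const ‖compSeq h k₀ z‖

end Basin

theorem basin_boundary_in_julia_general (n : ℕ)
    (Hgen : Fin n → ℂ × ℂ → ℂ × ℂ) (hHenon : ∀ i, IsHenon (Hgen i))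
    (r α : ℝ) (hr : 0 < r) (hα0 : 0 < α) (hα1 : α < 1)
    (hattr : ∀ i, ∀ z ∈ Metric.ball (0 : ℂ × ℂ) r, ‖Hgen i z‖ ≤ α * ‖z‖)
    (h : ℕ → ℂ × ℂ → ℂ × ℂ) (hmem : ∀ k, ∃ i, h k = Hgen i) :
    frontier {z : ℂ × ℂ | Tendsto (fun k => compSeq h k z) atTop (nhds 0)} ⊆
      frontier {z : ℂ × ℂ | IsBounded (Set.range fun k => compSeq h k z)} := by
  choose idx hidx using hmem
  obtain ⟨R, hR, hfilt⟩ := exists_pos_respectsFiltration hHenon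
  have hdiff := differentiable_compSeq fun k => hidx k ▸ (hHenon (idx k)).differentiable
  have hΩ : IsOpen (basin h) := isOpen_basin hr hα0.le hα1
    (fun k => hidx k ▸ hattr (idx k)) fun k => (hdiff k).continuous
  show frontier (basin h) ⊆ frontier (filledJulia h)
  intro z hz
  rw [frontier, hΩ.interior_eq] at hz
  refine ⟨closure_mono (basin_subset_filledJulia h) hz.1, fun hzK => hz.2 ?_⟩
  obtain ⟨ρ, hρ, hball⟩ := Metric.mem_nhds_iff.1 (mem_interior_iff_mem_nhds.1 hzK)
  have hbound : ∀ k, ∀ u ∈ ball z ρ, ‖compSeq h k u‖ ≤ max (‖z‖ + ρ) R := fun k u hu =>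
    (norm_compSeq_le_of_mem_filledJulia hR (fun k => hidx k ▸ hfilt (idx k)) (hball hu) k).trans
      (max_le_max_right R (norm_le_of_mem_closedBall (ball_subset_closedBall hu)))
  have hequi : EquicontinuousAt (compSeq h) z :=
    equicontinuousAt_of_differentiableOn_of_norm_le hρ (fun k => (hdiff k).differentiableOn) hbound
  exact hequi.tendsto_of_mem_closure tendsto_const_nhds (fun _ hy => hy) hz.1

/-- for a non-autonomous sequence of Hénon maps drawn from a finite
generating set, each uniformly attracting on `B(0;r)`, the boundary of the
non-autonomous attracting basin `Ω_h` of the origin is contained in the boundary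
of the non-autonomous filled positive Julia set `K_h^+`. -/
theorem basin_boundary_in_julia (n : ℕ) (hn : 0 < n)
    (Hgen : Fin n → ℂ × ℂ → ℂ × ℂ) (hHenon : ∀ i, IsHenon (Hgen i))
    (r α : ℝ) (hr : 0 < r) (hα0 : 0 < α) (hα1 : α < 1)
    (hattr : ∀ i, ∀ z ∈ Metric.ball (0 : ℂ × ℂ) r, ‖Hgen i z‖ ≤ α * ‖z‖)
    (h : ℕ → ℂ × ℂ → ℂ × ℂ) (hmem : ∀ k, ∃ i, h k = Hgen i) :
    frontier {z : ℂ × ℂ | Tendsto (fun k => compSeq h k z) atTop (nhds 0)} ⊆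
      frontier {z : ℂ × ℂ | IsBounded (Set.range fun k => compSeq h k z)} :=
  basin_boundary_in_julia_general n Hgen hHenon r α hr hα0 hα1 hattr h hmem
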